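/- arXiv:1506.05426 — 2 statements merged into one kernel-verified Lean document; each statement's English description precedes it below -/
import Mathlib

section
/- For every positive integer m, the function H_m is completely multiplicative: H_m(xy) = H_m(x) · H_m(y) for all positive integers x and y. -/
open Finset

/-- The Schemmel totient function: `L m 0 = 0`, `L m 1 = 1`, and for `n > 1`,
`L m n = ∏ p^(α-1) (p - m)` over the canonical factorization of `n` if every
prime divisor of `n` exceeds `m`, and `0` otherwise. -/
def L (m n : ℕ) : ℕ :=
  if n ≤ 1 then n
  else if ∀ p ∈ n.primeFactors, m < p then
    ∏ p ∈ n.primeFactors, p ^ (n.factorization p - 1) * (p - m)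
  else 0

/-- `R m n` is the least positive `k` with `L_m^{(k)}(n) ∈ {0, 1}`. -/
noncomputable def R (m n : ℕ) : ℕ :=
  sInf {k | 0 < k ∧ ((L m)^[k] n = 0 ∨ (L m)^[k] n = 1)}

/-- `H m n = L_m^{(R_m(n))}(n)`. -/
noncomputable def H (m n : ℕ) : ℕ := (L m)^[R m n] n

/-- `D m 1 = 0` and `D m n = ∑_{i=1}^{R_m(n)} L_m^{(i)}(n)` for `n > 1`. -/
noncomputable def D (m n : ℕ) : ℕ :=
  if n = 1 then 0 else ∑ i ∈ Finset.Icc 1 (R m n), (L m)^[i] n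

/-!
`H m n` is `1` or `0` according as the `L m`-orbit of `n` reaches `1` or falls into `0`, the two
fixed points of `L m`. Since `L m` maps divisors to divisors, reaching `1` passes to divisors.
Conversely, whether `n` reaches `1` depends only on its prime factors: every prime factor of
`L m n` is a prime factor of `n` or divides `L m p = p - m` for a prime `p ∣ n`, and `L m n < n`
drives a strong induction. Hence `x * y` reaches `1` exactly when both `x` and `y` do.
-/

lemma L_zero (m : ℕ) : L m 0 = 0 := by simp [L]

lemma L_one (m : ℕ) : L m 1 = 1 := by simp [L]

lemma L_of_ne_zero {m n : ℕ} (hn : n ≠ 0) :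
    L m n = if ∀ p ∈ n.primeFactors, m < p then
      ∏ p ∈ n.primeFactors, p ^ (n.factorization p - 1) * (p - m) else 0 := by
  rcases eq_or_ne n 1 with rfl | hn1
  · simp [L]
  · rw [L, if_neg (by omega)]

-- Truncated subtraction makes this hold also for `p ≤ m`, where both sides vanish.
lemma L_prime {m p : ℕ} (hp : p.Prime) : L m p = p - m := by
  rw [L_of_ne_zero hp.ne_zero, hp.primeFactors]
  split_ifs with hmp
  · simp [hp.factorization_self]
  · simp only [mem_singleton, forall_eq, not_lt] at hmp
    omega

lemma L_ne_zero {m n : ℕ} (hn : n ≠ 0) (h : ∀ p ∈ n.primeFactors, m < p) : L m n ≠ 0 := by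
  rw [L_of_ne_zero hn, if_pos h, prod_ne_zero_iff]
  exact fun p hp => (Nat.mul_pos (pow_pos (Nat.pos_of_mem_primeFactors hp) _)
    (Nat.sub_pos_of_lt (h p hp))).ne'

lemma L_lt_self {m n : ℕ} (hm : 0 < m) (hn : 1 < n) : L m n < n := by
  have hn0 : n ≠ 0 := by omega
  rw [L_of_ne_zero hn0]
  split_ifs with h
  · conv_rhs => rw [Nat.prod_primeFactors_pow_factorization hn0]
    refine prod_lt_prod_of_nonempty (fun p hp => ?_) (fun p hp => ?_)
      (Nat.nonempty_primeFactors.mpr hn)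
    · exact Nat.mul_pos (pow_pos (Nat.pos_of_mem_primeFactors hp) _) (Nat.sub_pos_of_lt (h p hp))
    · have hp0 := Nat.pos_of_mem_primeFactors hp
      have ha : 0 < n.factorization p := Nat.pos_of_ne_zero (Finsupp.mem_support_iff.mp hp)
      calc p ^ (n.factorization p - 1) * (p - m)
          < p ^ (n.factorization p - 1) * p := Nat.mul_lt_mul_of_pos_left (by omega) (by positivity)
        _ = p ^ n.factorization p := by rw [← pow_succ, Nat.sub_add_cancel ha]
  · omega

lemma L_dvd_L {m d n : ℕ} (h : d ∣ n) : L m d ∣ L m n := by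
  rcases eq_or_ne n 0 with rfl | hn
  · simp [L_zero]
  have hd : d ≠ 0 := ne_zero_of_dvd_ne_zero hn h
  have hsub : d.primeFactors ⊆ n.primeFactors := Nat.primeFactors_mono h hn
  rw [L_of_ne_zero hd, L_of_ne_zero hn]
  by_cases hmn : ∀ p ∈ n.primeFactors, m < p
  · rw [if_pos fun p hp => hmn p (hsub hp), if_pos hmn]
    calc ∏ p ∈ d.primeFactors, p ^ (d.factorization p - 1) * (p - m)
        ∣ ∏ p ∈ d.primeFactors, p ^ (n.factorization p - 1) * (p - m) :=
          prod_dvd_prod_of_dvd _ _ fun p _ => mul_dvd_mul_right (pow_dvd_pow p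
            (Nat.sub_le_sub_right ((Nat.factorization_le_iff_dvd hd hn).mpr h p) 1)) _
      _ ∣ ∏ p ∈ n.primeFactors, p ^ (n.factorization p - 1) * (p - m) :=
          prod_dvd_prod_of_subset _ _ _ hsub
  · rw [if_neg hmn]
    exact dvd_zero _

lemma exists_eq_or_dvd_L_of_mem_primeFactors_L {m n q : ℕ} (hq : q ∈ (L m n).primeFactors) :
    ∃ p ∈ n.primeFactors, q = p ∨ q ∣ L m p := by
  rcases eq_or_ne n 0 with rfl | hn
  · simp [L_zero] at hq
  have hqp := Nat.prime_of_mem_primeFactors hq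
  by_cases h : ∀ p ∈ n.primeFactors, m < p
  · have hqL := Nat.dvd_of_mem_primeFactors hq
    rw [L_of_ne_zero hn, if_pos h] at hqL
    obtain ⟨p, hp, hqdvd⟩ := hqp.prime.exists_mem_finset_dvd hqL
    have hpp := Nat.prime_of_mem_primeFactors hp
    refine ⟨p, hp, ?_⟩
    rcases hqp.prime.dvd_mul.mp hqdvd with hpow | hsub
    · exact .inl ((Nat.prime_dvd_prime_iff_eq hqp hpp).mp (hqp.dvd_of_dvd_pow hpow))
    · exact .inr (L_prime hpp ▸ hsub)
  · rw [L_of_ne_zero hn, if_neg h] at hq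
    simp at hq

lemma Function.iterate_eq_of_le {α : Type*} {f : α → α} {x a : α} (ha : Function.IsFixedPt f a) {k j : ℕ}
    (hk : f^[k] x = a) (hkj : k ≤ j) : f^[j] x = a := by
  obtain ⟨i, rfl⟩ := Nat.exists_eq_add_of_le hkj
  rw [add_comm, Function.iterate_add_apply, hk, Function.iterate_fixed ha]

def ReachesOne (m n : ℕ) : Prop := ∃ k, (L m)^[k] n = 1

namespace ReachesOne

variable {m n : ℕ}

lemma one (m : ℕ) : ReachesOne m 1 := ⟨0, rfl⟩

lemma of_L (h : ReachesOne m (L m n)) : ReachesOne m n :=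
  let ⟨k, hk⟩ := h
  ⟨k + 1, hk⟩

lemma L_of_ne_one (hn : n ≠ 1) (h : ReachesOne m n) : ReachesOne m (L m n) := by
  obtain ⟨_ | k, hk⟩ := h
  · exact absurd hk hn
  · exact ⟨k, hk⟩

lemma not_of_iterate_eq_zero {k : ℕ} (hk : (L m)^[k] n = 0) : ¬ ReachesOne m n := by
  rintro ⟨j, hj⟩
  have h0 := Function.iterate_eq_of_le (L_zero m) hk (le_max_left k j)
  have h1 := Function.iterate_eq_of_le (L_one m) hj (le_max_right k j)
  omega

lemma ne_zero (h : ReachesOne m n) : n ≠ 0 := by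
  rintro rfl
  exact not_of_iterate_eq_zero (k := 0) rfl h

lemma of_dvd {d : ℕ} (hd : d ∣ n) (h : ReachesOne m n) : ReachesOne m d := by
  have hdvd (k : ℕ) : (L m)^[k] d ∣ (L m)^[k] n := by
    induction k with
    | zero => exact hd
    | succ k ih => simpa only [Function.iterate_succ_apply'] using L_dvd_L ih
  obtain ⟨k, hk⟩ := h
  exact ⟨k, Nat.dvd_one.mp (hk ▸ hdvd k)⟩

lemma lt_of_prime {p : ℕ} (hp : p.Prime) (h : ReachesOne m p) : m < p := by
  have := (h.L_of_ne_one hp.one_lt.ne').ne_zero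
  rw [L_prime hp] at this
  omega

end ReachesOne

lemma reachesOne_iff_forall_primeFactors {m : ℕ} (hm : 0 < m) {n : ℕ} (hn : n ≠ 0) :
    ReachesOne m n ↔ ∀ p ∈ n.primeFactors, ReachesOne m p := by
  induction n using Nat.strong_induction_on with
  | _ n ih =>
  refine ⟨fun h p hp => h.of_dvd (Nat.dvd_of_mem_primeFactors hp), fun hall => ?_⟩
  rcases eq_or_ne n 1 with rfl | hn1
  · exact ReachesOne.one m
  have hgt : ∀ p ∈ n.primeFactors, m < p := fun p hp =>
    (hall p hp).lt_of_prime (Nat.prime_of_mem_primeFactors hp)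
  refine ReachesOne.of_L ((ih _ (L_lt_self hm (by omega)) (L_ne_zero hn hgt)).mpr fun q hq => ?_)
  obtain ⟨p, hp, rfl | hqdvd⟩ := exists_eq_or_dvd_L_of_mem_primeFactors_L hq
  · exact hall q hp
  · have hp1 : p ≠ 1 := (Nat.prime_of_mem_primeFactors hp).one_lt.ne'
    exact ((hall p hp).L_of_ne_one hp1).of_dvd hqdvd

lemma reachesOne_mul_iff {m : ℕ} (hm : 0 < m) {x y : ℕ} :
    ReachesOne m (x * y) ↔ ReachesOne m x ∧ ReachesOne m y := by
  refine ⟨fun h => ⟨h.of_dvd (dvd_mul_right x y), h.of_dvd (dvd_mul_left y x)⟩, ?_⟩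
  rintro ⟨hx, hy⟩
  rw [reachesOne_iff_forall_primeFactors hm (mul_ne_zero hx.ne_zero hy.ne_zero),
    Nat.primeFactors_mul hx.ne_zero hy.ne_zero]
  intro p hp
  rcases mem_union.mp hp with hp | hp
  · exact (reachesOne_iff_forall_primeFactors hm hx.ne_zero).mp hx p hp
  · exact (reachesOne_iff_forall_primeFactors hm hy.ne_zero).mp hy p hp

lemma exists_iterate_L_eq_zero_or_one {m : ℕ} (hm : 0 < m) (n : ℕ) :
    ∃ k, 0 < k ∧ ((L m)^[k] n = 0 ∨ (L m)^[k] n = 1) := by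
  induction n using Nat.strong_induction_on with
  | _ n ih =>
  rcases Nat.lt_or_ge n 2 with hn | hn
  · refine ⟨1, one_pos, ?_⟩
    interval_cases n <;> simp [L_zero, L_one]
  · obtain ⟨k, hk, hk01⟩ := ih (L m n) (L_lt_self hm hn)
    exact ⟨k + 1, k.succ_pos, hk01⟩

lemma H_eq_zero_or_one {m : ℕ} (hm : 0 < m) (n : ℕ) : H m n = 0 ∨ H m n = 1 :=
  (Nat.sInf_mem (exists_iterate_L_eq_zero_or_one hm n)).2

open Classical in
lemma H_eq_ite {m : ℕ} (hm : 0 < m) (n : ℕ) : H m n = if ReachesOne m n then 1 else 0 := by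
  rcases H_eq_zero_or_one hm n with h | h
  · rw [h, if_neg (ReachesOne.not_of_iterate_eq_zero h)]
  · rw [h, if_pos ⟨R m n, h⟩]

theorem H_completely_multiplicative_general (m : ℕ) (hm : 0 < m) (x y : ℕ) :
    H m (x * y) = H m x * H m y := by
  classical
  simp only [H_eq_ite hm, reachesOne_mul_iff hm]
  by_cases hx : ReachesOne m x <;> by_cases hy : ReachesOne m y <;> simp [hx, hy]

theorem H_completely_multiplicative (m : ℕ) (hm : 0 < m) (x y : ℕ)
    (hx : 0 < x) (hy : 0 < y) : H m (x * y) = H m x * H m y :=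
  H_completely_multiplicative_general m hm x y
end

section
/- If m is a positive integer with m > 1 and m ≠ 4, then every positive multiple of 5 satisfies D_m(n) < n. -/
open Finset

/-! ### Basic lemmas about `L` -/

lemma L_of_le_one {m n : ℕ} (h : n ≤ 1) : L m n = n := by simp [L, h]

lemma L_of_bad {m n : ℕ} (h2 : 2 ≤ n) (h : ¬ ∀ p ∈ n.primeFactors, m < p) :
    L m n = 0 := by
  simp only [L, if_neg (by omega : ¬ n ≤ 1), if_neg h]

lemma L_eq_prod {m n : ℕ} (h2 : 2 ≤ n) (h : ∀ p ∈ n.primeFactors, m < p) :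
    L m n = ∏ p ∈ n.primeFactors, p ^ (n.factorization p - 1) * (p - m) := by
  simp only [L, if_neg (by omega : ¬ n ≤ 1), if_pos h]

lemma prod_primeFactors_eq {n : ℕ} (hn : n ≠ 0) :
    ∏ p ∈ n.primeFactors, p ^ n.factorization p = n := by
  conv_rhs => rw [← Nat.factorization_prod_pow_eq_self hn]
  rfl

lemma L_pos {m n : ℕ} (h2 : 2 ≤ n) (h : ∀ p ∈ n.primeFactors, m < p) :
    1 ≤ L m n := by
  rw [L_eq_prod h2 h]
  have : (0:ℕ) < ∏ p ∈ n.primeFactors, p ^ (n.factorization p - 1) * (p - m) := by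
    refine Finset.prod_pos fun p hp => ?_
    have hp' := Nat.prime_of_mem_primeFactors hp
    have := h p hp
    exact Nat.mul_pos (pow_pos hp'.pos _) (by omega)
  omega

lemma factor_dvd_L {m n p : ℕ} (h2 : 2 ≤ n) (h : ∀ q ∈ n.primeFactors, m < q)
    (hp : p ∈ n.primeFactors) :
    p ^ (n.factorization p - 1) * (p - m) ∣ L m n := by
  rw [L_eq_prod h2 h]
  exact Finset.dvd_prod_of_mem _ hp

lemma L_mul_le {m n p : ℕ} (h2 : 2 ≤ n) (h : ∀ q ∈ n.primeFactors, m < q)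
    (hp : p ∈ n.primeFactors) :
    p * L m n ≤ (p - m) * n := by
  rw [L_eq_prod h2 h]
  have hn0 : n ≠ 0 := by omega
  have hmem := hp
  rw [← Finset.mul_prod_erase _ _ hp]
  conv_rhs => rw [← prod_primeFactors_eq hn0, ← Finset.mul_prod_erase _ _ hp]
  have hple : ∀ q ∈ n.primeFactors.erase p,
      q ^ (n.factorization q - 1) * (q - m) ≤ q ^ n.factorization q := by
    intro q hq
    have hq' := Nat.prime_of_mem_primeFactors (Finset.mem_of_mem_erase hq)
    have hqf : 1 ≤ n.factorization q := by
      have : q ∈ n.factorization.support := by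
        rw [Nat.support_factorization]; exact Finset.mem_of_mem_erase hq
      have := Finsupp.mem_support_iff.mp this
      omega
    calc q ^ (n.factorization q - 1) * (q - m)
        ≤ q ^ (n.factorization q - 1) * q := by
          exact Nat.mul_le_mul_left _ (by omega)
      _ = q ^ n.factorization q := by
          rw [← pow_succ]; congr 1; omega
  have hpf : 1 ≤ n.factorization p := by
    have : p ∈ n.factorization.support := by
      rw [Nat.support_factorization]; exact hp
    have := Finsupp.mem_support_iff.mp this
    omega
  have hprod : ∏ q ∈ n.primeFactors.erase p, q ^ (n.factorization q - 1) * (q - m)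
      ≤ ∏ q ∈ n.primeFactors.erase p, q ^ n.factorization q :=
    Finset.prod_le_prod (fun _ _ => Nat.zero_le _) hple
  calc p * (p ^ (n.factorization p - 1) * (p - m) *
        ∏ q ∈ n.primeFactors.erase p, q ^ (n.factorization q - 1) * (q - m))
      = (p - m) * (p * p ^ (n.factorization p - 1)) *
        ∏ q ∈ n.primeFactors.erase p, q ^ (n.factorization q - 1) * (q - m) := by ring
    _ = (p - m) * p ^ n.factorization p *
        ∏ q ∈ n.primeFactors.erase p, q ^ (n.factorization q - 1) * (q - m) := by
        have hps : p * p ^ (n.factorization p - 1) = p ^ n.factorization p := by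
          rw [← pow_succ']; congr 1; omega
        rw [hps]
    _ ≤ (p - m) * p ^ n.factorization p *
        ∏ q ∈ n.primeFactors.erase p, q ^ n.factorization q := by
        exact Nat.mul_le_mul_left _ hprod
    _ = (p - m) * (p ^ n.factorization p *
        ∏ q ∈ n.primeFactors.erase p, q ^ n.factorization q) := by ring

lemma L_lt {m n : ℕ} (hm : 1 ≤ m) (h2 : 2 ≤ n) : L m n < n := by
  by_cases h : ∀ p ∈ n.primeFactors, m < p
  · obtain ⟨p, hp⟩ := Nat.nonempty_primeFactors.mpr (by omega : 1 < n)
    have h1 := L_mul_le h2 h hp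
    have hpp := Nat.prime_of_mem_primeFactors hp
    have hple : (p - m) * n < p * n := by
      have hlt : p - m < p := by have := hpp.two_le; omega
      exact mul_lt_mul_of_pos_right hlt (by omega)
    exact lt_of_mul_lt_mul_left (lt_of_le_of_lt h1 hple) (Nat.zero_le p)
  · rw [L_of_bad h2 h]; omega

/-! ### Iteration and recursion for `R` and `D` -/

lemma iterate_fix {m n : ℕ} (h : n ≤ 1) (k : ℕ) : (L m)^[k] n = n := by
  induction k with
  | zero => rfl
  | succ k ih => rw [Function.iterate_succ_apply', ih, L_of_le_one h]

lemma iterate_le_one {m : ℕ} (hm : 1 ≤ m) : ∀ k n : ℕ, n ≤ k → (L m)^[k] n ≤ 1 := by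
  intro k
  induction k with
  | zero => intro n hn; interval_cases n; simp
  | succ k ih =>
    intro n hn
    by_cases h1 : n ≤ 1
    · rw [iterate_fix h1]; exact h1
    · rw [Function.iterate_succ_apply]
      exact ih _ (by have := L_lt hm (by omega : 2 ≤ n); omega)

lemma R_set_nonempty {m n : ℕ} (hm : 1 ≤ m) :
    {k | 0 < k ∧ ((L m)^[k] n = 0 ∨ (L m)^[k] n = 1)}.Nonempty := by
  refine ⟨n + 1, Nat.succ_pos _, ?_⟩
  have := iterate_le_one hm (n + 1) n (by omega)
  omega

lemma R_mem {m n : ℕ} (hm : 1 ≤ m) :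
    0 < R m n ∧ ((L m)^[R m n] n = 0 ∨ (L m)^[R m n] n = 1) :=
  Nat.sInf_mem (R_set_nonempty hm)

lemma R_eq_one {m n : ℕ} (hm : 1 ≤ m) (h2 : 2 ≤ n) (hL : L m n ≤ 1) : R m n = 1 := by
  have h1 : 1 ∈ {k | 0 < k ∧ ((L m)^[k] n = 0 ∨ (L m)^[k] n = 1)} := by
    constructor
    · omega
    · simp only [Function.iterate_one]; omega
  have hle : R m n ≤ 1 := Nat.sInf_le h1
  have := (R_mem (n := n) hm).1
  omega

lemma R_succ {m n : ℕ} (hm : 1 ≤ m) (h2 : 2 ≤ n) (hL : 2 ≤ L m n) :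
    R m n = R m (L m n) + 1 := by
  set S : Set ℕ := {k | 0 < k ∧ ((L m)^[k] n = 0 ∨ (L m)^[k] n = 1)} with hS
  set r := R m (L m n) with hr
  have hrmem := R_mem (n := L m n) hm
  have hmem : r + 1 ∈ S := by
    constructor
    · omega
    · rw [Function.iterate_succ_apply]; exact hrmem.2
  have hle : R m n ≤ r + 1 := Nat.sInf_le hmem
  have hRmem := R_mem (n := n) hm
  have hR2 : 2 ≤ R m n := by
    rcases Nat.lt_or_ge (R m n) 2 with h | h
    · exfalso
      have h1 : R m n = 1 := by omega
      have := hRmem.2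
      rw [h1] at this
      simp only [Function.iterate_one] at this
      omega
    · exact h
  have hmem' : R m n - 1 ∈ {k | 0 < k ∧ ((L m)^[k] (L m n) = 0 ∨ (L m)^[k] (L m n) = 1)} := by
    constructor
    · omega
    · have : (L m)^[R m n] n = (L m)^[R m n - 1] (L m n) := by
        conv_lhs => rw [show R m n = (R m n - 1) + 1 by omega]
        rw [Function.iterate_succ_apply]
      rw [← this]; exact hRmem.2
  have : r ≤ R m n - 1 := Nat.sInf_le hmem'
  omega

lemma sum_Icc_shift (f : ℕ → ℕ) (r : ℕ) :
    ∑ i ∈ Finset.Icc 1 (r + 1), f i = f 1 + ∑ i ∈ Finset.Icc 1 r, f (i + 1) := by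
  induction r with
  | zero => simp
  | succ r ih =>
    rw [Finset.sum_Icc_succ_top (by omega : 1 ≤ r + 1 + 1), ih,
      Finset.sum_Icc_succ_top (by omega : 1 ≤ r + 1)]
    ring

lemma D_eq_L {m n : ℕ} (hm : 1 ≤ m) (h2 : 2 ≤ n) (hL : L m n ≤ 1) : D m n = L m n := by
  rw [D, if_neg (by omega : ¬ n = 1), R_eq_one hm h2 hL]
  simp

lemma D_rec {m n : ℕ} (hm : 1 ≤ m) (h2 : 2 ≤ n) (hL : 2 ≤ L m n) :
    D m n = L m n + D m (L m n) := by
  rw [D, if_neg (by omega : ¬ n = 1), R_succ hm h2 hL, sum_Icc_shift]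
  rw [D, if_neg (by omega : ¬ L m n = 1)]
  have h1 : (L m)^[1] n = L m n := Function.iterate_one (L m) ▸ rfl
  rw [h1]
  congr 1

/-! ### m = 2 : parity and mod 3 structure -/

lemma not_two_dvd_L2 {n : ℕ} (h2 : 2 ≤ n) (h : ∀ p ∈ n.primeFactors, 2 < p) :
    ¬ 2 ∣ L 2 n := by
  rw [L_eq_prod h2 h]
  intro hdvd
  obtain ⟨p, hp, hpd⟩ := (Prime.dvd_finset_prod_iff Nat.prime_two.prime _).mp hdvd
  have hpp := Nat.prime_of_mem_primeFactors hp
  have hgt := h p hp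
  rcases (Nat.Prime.dvd_mul Nat.prime_two).mp hpd with h' | h'
  · have h2p : 2 ∣ p := Nat.Prime.dvd_of_dvd_pow Nat.prime_two h'
    have := (Nat.prime_dvd_prime_iff_eq Nat.prime_two hpp).mp h2p
    omega
  · have h2p : 2 ∣ p := by
      have := Nat.dvd_add h' (dvd_refl 2)
      rwa [Nat.sub_add_cancel (by omega)] at this
    have := (Nat.prime_dvd_prime_iff_eq Nat.prime_two hpp).mp h2p
    omega

lemma G2_L {n : ℕ} (h : ∀ p ∈ n.primeFactors, 2 < p) :
    ∀ p ∈ (L 2 n).primeFactors, 2 < p := by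
  by_cases h2 : 2 ≤ n
  · intro q hq
    have hqp := Nat.prime_of_mem_primeFactors hq
    have hqd := Nat.dvd_of_mem_primeFactors hq
    rcases Nat.lt_or_ge 2 q with h' | h'
    · exact h'
    · exfalso
      have : q = 2 := by have := hqp.two_le; omega
      exact not_two_dvd_L2 h2 h (this ▸ hqd)
  · have h1 : n ≤ 1 := by omega
    rw [L_of_le_one h1]
    interval_cases n <;> simp

lemma exists_prime_two_mod_three : ∀ x : ℕ, x % 3 = 2 →
    ∃ q, Nat.Prime q ∧ q ∣ x ∧ q % 3 = 2 := by
  intro x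
  induction x using Nat.strong_induction_on with
  | _ x ih =>
    intro hx
    obtain ⟨q, hq, hqd⟩ := Nat.exists_prime_and_dvd (by omega : x ≠ 1)
    have hq2 := hq.two_le
    rcases (by omega : q % 3 = 0 ∨ q % 3 = 1 ∨ q % 3 = 2) with h | h | h
    · exfalso
      have h3q : 3 ∣ q := by omega
      have := (Nat.prime_dvd_prime_iff_eq Nat.prime_three hq).mp h3q
      subst this
      obtain ⟨y, hy⟩ := hqd
      omega
    · obtain ⟨y, hy⟩ := hqd
      have hy3 : y % 3 = 2 := by
        have := Nat.mul_mod q y 3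
        rw [← hy, h] at this
        omega
      have hylt : y < x := by
        have hy0 : y ≠ 0 := by rintro rfl; omega
        have : 2 * y ≤ q * y := Nat.mul_le_mul_right y hq2
        omega
      obtain ⟨q', hq'p, hq'd, hq'3⟩ := ih y hylt hy3
      exact ⟨q', hq'p, hq'd.trans ⟨q, by rw [hy]; ring⟩, hq'3⟩
    · exact ⟨q, hq, hqd, h⟩

lemma sub_two_dvd_L2 {n p : ℕ} (h2 : 2 ≤ n) (h : ∀ q ∈ n.primeFactors, 2 < q)
    (hp : p ∈ n.primeFactors) : (p - 2) ∣ L 2 n :=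
  (dvd_mul_left _ _).trans (factor_dvd_L h2 h hp)

lemma claimC : ∀ k : ℕ, 2 ≤ k → 3 ∣ k → D 2 k ≤ k - 1 := by
  intro k
  induction k using Nat.strong_induction_on with
  | _ k ih =>
    intro hk2 hk3
    by_cases hG : ∀ p ∈ k.primeFactors, 2 < p
    · have h3mem : 3 ∈ k.primeFactors :=
        Nat.mem_primeFactors.mpr ⟨Nat.prime_three, hk3, by omega⟩
      have h3l : 3 * L 2 k ≤ k := by
        have := L_mul_le hk2 hG h3mem
        simpa using this
      by_cases hl1 : L 2 k ≤ 1
      · rw [D_eq_L (by norm_num) hk2 hl1]; omega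
      · push_neg at hl1
        have hl2 : 2 ≤ L 2 k := hl1
        rw [D_rec (by norm_num) hk2 hl2]
        by_cases h3dl : 3 ∣ L 2 k
        · have := ih (L 2 k) (by omega) hl2 h3dl
          omega
        · have hGl : ∀ p ∈ (L 2 k).primeFactors, 2 < p := G2_L hG
          have hex : ∃ p ∈ k.primeFactors, p ≠ 3 := by
            by_contra hcon
            push_neg at hcon
            have hsing : k.primeFactors = {3} := by
              apply Finset.eq_singleton_iff_unique_mem.mpr
              exact ⟨h3mem, fun p hp => hcon p hp⟩
            have hlval : L 2 k = 3 ^ (k.factorization 3 - 1) := by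
              rw [L_eq_prod hk2 hG, hsing, Finset.prod_singleton]
              norm_num
            rcases Nat.eq_zero_or_pos (k.factorization 3 - 1) with h0 | h0
            · rw [h0, pow_zero] at hlval; omega
            · exact h3dl (hlval ▸ dvd_pow_self 3 (by omega))
          obtain ⟨p, hp, hp3⟩ := hex
          have hpp := Nat.prime_of_mem_primeFactors hp
          have hpgt := hG p hp
          have hsub : (p - 2) ∣ L 2 k := sub_two_dvd_L2 hk2 hG hp
          have h3np : ¬ 3 ∣ (p - 2) := fun hh => h3dl (hh.trans hsub)
          have h3p : ¬ 3 ∣ p := fun hh =>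
            hp3 ((Nat.prime_dvd_prime_iff_eq Nat.prime_three hpp).mp hh).symm
          have hpsub2 : (p - 2) % 3 = 2 := by omega
          obtain ⟨q, hqp, hqd, hq3⟩ := exists_prime_two_mod_three _ hpsub2
          have hql : q ∣ L 2 k := hqd.trans hsub
          have hqmem : q ∈ (L 2 k).primeFactors :=
            Nat.mem_primeFactors.mpr ⟨hqp, hql, by omega⟩
          have hqgt : 2 < q := hGl q hqmem
          have hqsub : (q - 2) ∣ L 2 (L 2 k) := sub_two_dvd_L2 hl2 hGl hqmem
          have h3l2 : 3 ∣ L 2 (L 2 k) := (by omega : (3:ℕ) ∣ q - 2).trans hqsub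
          have hl2lt : L 2 (L 2 k) < L 2 k := L_lt (by norm_num) hl2
          by_cases hl21 : L 2 (L 2 k) ≤ 1
          · rw [D_eq_L (by norm_num) hl2 hl21]; omega
          · push_neg at hl21
            rw [D_rec (by norm_num) hl2 hl21]
            have := ih (L 2 (L 2 k)) (by omega) hl21 h3l2
            omega
    · have hL0 : L 2 k = 0 := L_of_bad hk2 hG
      rw [D_eq_L (by norm_num) hk2 (by omega), hL0]
      omega

/-! ### The impossibility lemma for multiples of 5 -/

lemma imposs {n : ℕ} (h2 : 2 ≤ n) (h5 : 5 ∣ n) (hG : ∀ p ∈ n.primeFactors, 2 < p)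
    (hk2 : 2 ≤ L 2 (L 2 n)) (h3 : ¬ 3 ∣ L 2 (L 2 n)) : False := by
  have h5mem : 5 ∈ n.primeFactors :=
    Nat.mem_primeFactors.mpr ⟨by norm_num, h5, by omega⟩
  have h3k1 : 3 ∣ L 2 n := by
    have := sub_two_dvd_L2 h2 hG h5mem
    norm_num at this
    exact this
  have hk1pos : 1 ≤ L 2 n := L_pos h2 hG
  have hk1ge : 2 ≤ L 2 n := by omega
  have hk1ne : L 2 n ≠ 0 := by omega
  have hGk1 : ∀ p ∈ (L 2 n).primeFactors, 2 < p := G2_L hG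
  have h3memk1 : 3 ∈ (L 2 n).primeFactors :=
    Nat.mem_primeFactors.mpr ⟨Nat.prime_three, h3k1, hk1ne⟩
  have hbpos : 1 ≤ (L 2 n).factorization 3 :=
    Nat.Prime.factorization_pos_of_dvd Nat.prime_three hk1ne h3k1
  have hb1 : (L 2 n).factorization 3 = 1 := by
    by_contra hb
    have hb2 : 2 ≤ (L 2 n).factorization 3 := by omega
    have hf3 : 3 ^ ((L 2 n).factorization 3 - 1) * (3 - 2) ∣ L 2 (L 2 n) :=
      factor_dvd_L hk1ge hGk1 h3memk1
    have : (3:ℕ) ∣ L 2 (L 2 n) := by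
      refine dvd_trans ?_ hf3
      have : (3:ℕ) ∣ 3 ^ ((L 2 n).factorization 3 - 1) := dvd_pow_self 3 (by omega)
      simpa using this
    exact h3 this
  have no9 : ¬ (9:ℕ) ∣ L 2 n := by
    intro h9
    have : (3:ℕ) ^ 2 ∣ L 2 n := by norm_num; exact h9
    have := (Nat.Prime.pow_dvd_iff_le_factorization Nat.prime_three hk1ne).mp this
    omega
  have hd : ∀ d : ℕ, d ∣ L 2 n → d % 3 ≠ 2 := by
    intro d hdk hdm
    obtain ⟨q, hqp, hqd, hq3⟩ := exists_prime_two_mod_three d hdm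
    have hqk1 : q ∣ L 2 n := hqd.trans hdk
    have hqmem : q ∈ (L 2 n).primeFactors := Nat.mem_primeFactors.mpr ⟨hqp, hqk1, hk1ne⟩
    have hqgt : 2 < q := hGk1 q hqmem
    have hqsub : (q - 2) ∣ L 2 (L 2 n) := sub_two_dvd_L2 hk1ge hGk1 hqmem
    exact h3 ((by omega : (3:ℕ) ∣ q - 2).trans hqsub)
  have hPn : ∀ p ∈ n.primeFactors, p = 3 ∨ p = 5 := by
    intro p hp
    by_contra hcon
    push_neg at hcon
    obtain ⟨hpne3, hpne5⟩ := hcon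
    have hpp := Nat.prime_of_mem_primeFactors hp
    have hpgt := hG p hp
    have h5nep : (5:ℕ) ≠ p := fun h => hpne5 h.symm
    have hpairsub : ({5, p} : Finset ℕ) ⊆ n.primeFactors := by
      intro x hx
      simp only [Finset.mem_insert, Finset.mem_singleton] at hx
      rcases hx with rfl | rfl
      · exact h5mem
      · exact hp
    have hpair : (5:ℕ) ^ (n.factorization 5 - 1) * (5 - 2) *
        (p ^ (n.factorization p - 1) * (p - 2)) ∣ L 2 n := by
      have hdvd := Finset.prod_dvd_prod_of_subset _ _
        (fun r => r ^ (n.factorization r - 1) * (r - 2)) hpairsub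
      rw [Finset.prod_pair h5nep] at hdvd
      rw [L_eq_prod h2 hG]
      exact hdvd
    have h3p2 : 3 * (p - 2) ∣ L 2 n := by
      refine dvd_trans (mul_dvd_mul ?_ ?_) hpair
      · norm_num
      · exact dvd_mul_left _ _
    by_cases h3sub : 3 ∣ (p - 2)
    · apply no9
      obtain ⟨t, ht⟩ := h3sub
      have : (9:ℕ) ∣ 3 * (p - 2) := ⟨t, by rw [ht]; ring⟩
      exact this.trans h3p2
    · have hp2k1 : (p - 2) ∣ L 2 n := (dvd_mul_left _ _).trans h3p2
      have hne2 := hd (p - 2) hp2k1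
      have hp3dvd : 3 ∣ p := by omega
      have := (Nat.prime_dvd_prime_iff_eq Nat.prime_three hpp).mp hp3dvd
      omega
  have ha1 : n.factorization 5 = 1 := by
    have hapos : 1 ≤ n.factorization 5 :=
      Nat.Prime.factorization_pos_of_dvd (by norm_num) (by omega) h5
    by_contra ha
    have ha2 : 2 ≤ n.factorization 5 := by omega
    have h5k1 : (5:ℕ) ∣ L 2 n := by
      refine dvd_trans ?_ (factor_dvd_L h2 hG h5mem)
      exact dvd_mul_of_dvd_left (dvd_pow_self 5 (by omega)) _
    exact hd 5 h5k1 (by norm_num)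
  have he1 : 3 ∈ n.primeFactors → n.factorization 3 = 1 := by
    intro h3mem
    have hepos : 1 ≤ n.factorization 3 :=
      Nat.Prime.factorization_pos_of_dvd Nat.prime_three (by omega)
        (Nat.dvd_of_mem_primeFactors h3mem)
    by_contra he
    have he2 : 2 ≤ n.factorization 3 := by omega
    apply no9
    have hpairsub : ({3, 5} : Finset ℕ) ⊆ n.primeFactors := by
      intro x hx
      simp only [Finset.mem_insert, Finset.mem_singleton] at hx
      rcases hx with rfl | rfl
      · exact h3mem
      · exact h5mem
    have hpair : (3:ℕ) ^ (n.factorization 3 - 1) * (3 - 2) *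
        (5 ^ (n.factorization 5 - 1) * (5 - 2)) ∣ L 2 n := by
      have hdvd := Finset.prod_dvd_prod_of_subset _ _
        (fun r => r ^ (n.factorization r - 1) * (r - 2)) hpairsub
      rw [Finset.prod_pair (by norm_num : (3:ℕ) ≠ 5)] at hdvd
      rw [L_eq_prod h2 hG]
      exact hdvd
    refine dvd_trans ?_ hpair
    have h1 : (3:ℕ) ∣ 3 ^ (n.factorization 3 - 1) := dvd_pow_self 3 (by omega)
    have h2' : (3:ℕ) ∣ 5 ^ (n.factorization 5 - 1) * (5 - 2) := by
      norm_num
    calc (9:ℕ) = 3 * 3 := by norm_num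
      _ ∣ _ := mul_dvd_mul (dvd_mul_of_dvd_left h1 _) h2'
  -- conclude k1 = 3
  have hk1eq : L 2 n = 3 := by
    by_cases h3mem : 3 ∈ n.primeFactors
    · have hset : n.primeFactors = {3, 5} := by
        apply Finset.Subset.antisymm
        · intro x hx
          rcases hPn x hx with rfl | rfl <;> simp
        · intro x hx
          simp only [Finset.mem_insert, Finset.mem_singleton] at hx
          rcases hx with rfl | rfl
          · exact h3mem
          · exact h5mem
      rw [L_eq_prod h2 hG, hset, Finset.prod_pair (by norm_num : (3:ℕ) ≠ 5),
        he1 h3mem, ha1]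
      norm_num
    · have hset : n.primeFactors = {5} := by
        apply Finset.Subset.antisymm
        · intro x hx
          rcases hPn x hx with rfl | rfl
          · exact absurd hx h3mem
          · simp
        · intro x hx
          simp only [Finset.mem_singleton] at hx
          subst hx; exact h5mem
      rw [L_eq_prod h2 hG, hset, Finset.prod_singleton, ha1]
      norm_num
  rw [hk1eq] at hk2
  have : L 2 3 = 1 := by
    rw [L_eq_prod (by norm_num) (by
      intro p hp
      rw [Nat.Prime.primeFactors Nat.prime_three] at hp
      simp only [Finset.mem_singleton] at hp
      omega)]
    rw [Nat.Prime.primeFactors Nat.prime_three, Finset.prod_singleton,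
      Nat.Prime.factorization_self Nat.prime_three]
    norm_num
  omega

theorem Dm_deficient_of_five_dvd (m : ℕ) (hm : 1 < m) (hm4 : m ≠ 4) :
    ∀ n : ℕ, 0 < n → 5 ∣ n → D m n < n := by
  intro n hn h5
  have hn5 : 5 ≤ n := Nat.le_of_dvd hn h5
  have hn2 : 2 ≤ n := by omega
  have hm1 : 1 ≤ m := by omega
  have h5mem : 5 ∈ n.primeFactors :=
    Nat.mem_primeFactors.mpr ⟨by norm_num, h5, by omega⟩
  rcases (by omega : m = 2 ∨ m = 3 ∨ 5 ≤ m) with rfl | rfl | hm5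
  · -- m = 2
    by_cases hG : ∀ p ∈ n.primeFactors, 2 < p
    · have h3k1 : 3 ∣ L 2 n := by
        have := sub_two_dvd_L2 hn2 hG h5mem
        norm_num at this
        exact this
      have h5k1le : 5 * L 2 n ≤ 3 * n := by
        have := L_mul_le hn2 hG h5mem
        norm_num at this
        omega
      have hk1pos : 1 ≤ L 2 n := L_pos hn2 hG
      have hk1ge : 2 ≤ L 2 n := by omega
      rw [D_rec (by norm_num) hn2 hk1ge]
      have hGk1 : ∀ p ∈ (L 2 n).primeFactors, 2 < p := G2_L hG
      have h3memk1 : 3 ∈ (L 2 n).primeFactors :=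
        Nat.mem_primeFactors.mpr ⟨Nat.prime_three, h3k1, by omega⟩
      have h3k2le : 3 * L 2 (L 2 n) ≤ L 2 n := by
        have := L_mul_le hk1ge hGk1 h3memk1
        norm_num at this
        omega
      by_cases hk2le : L 2 (L 2 n) ≤ 1
      · rw [D_eq_L (by norm_num) hk1ge hk2le]
        omega
      · push_neg at hk2le
        by_cases h3k2 : 3 ∣ L 2 (L 2 n)
        · have hC := claimC (L 2 (L 2 n)) hk2le h3k2
          rw [D_rec (by norm_num) hk1ge hk2le]
          omega
        · exact (imposs hn2 h5 hG hk2le h3k2).elim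
    · have hL : L 2 n = 0 := L_of_bad hn2 hG
      rw [D_eq_L (by norm_num) hn2 (by omega), hL]
      omega
  · -- m = 3
    by_cases hG : ∀ p ∈ n.primeFactors, 3 < p
    · have hLlt := L_lt (m := 3) (n := n) (by norm_num) hn2
      have h2L : 2 ∣ L 3 n := by
        have hfd := factor_dvd_L hn2 hG h5mem
        have h2 : (2:ℕ) ∣ 5 ^ (n.factorization 5 - 1) * (5 - 3) := by norm_num
        exact h2.trans hfd
      have hLpos : 1 ≤ L 3 n := L_pos hn2 hG
      have hL2 : 2 ≤ L 3 n := by omega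
      rw [D_rec (by norm_num) hn2 hL2]
      have h2memL : 2 ∈ (L 3 n).primeFactors :=
        Nat.mem_primeFactors.mpr ⟨Nat.prime_two, h2L, by omega⟩
      have hGL : ¬ ∀ p ∈ (L 3 n).primeFactors, 3 < p := by
        push_neg; exact ⟨2, h2memL, by omega⟩
      have hL20 : L 3 (L 3 n) = 0 := L_of_bad hL2 hGL
      rw [D_eq_L (by norm_num) hL2 (by omega), hL20]
      omega
    · have hL : L 3 n = 0 := L_of_bad hn2 hG
      rw [D_eq_L (by norm_num) hn2 (by omega), hL]
      omega
  · -- m ≥ 5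
    have hG : ¬ ∀ p ∈ n.primeFactors, m < p := by
      push_neg; exact ⟨5, h5mem, by omega⟩
    have hL : L m n = 0 := L_of_bad hn2 hG
    rw [D_eq_L hm1 hn2 (by omega), hL]
    omega
end
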